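/- arXiv:2011.14367 — 2 statements merged into one kernel-verified Lean document; each statement's English description precedes it below -/
import Mathlib

section
/- The set of subfields F of the algebraic closure of ℚ that are PAC is a G_δ subset of the space 𝓔 of all subfields of the algebraic closure of ℚ; explicitly, it equals the intersection over all irreducible f ∈ Q̄[X,Y] of the open sets U_f = {F ∈ 𝓔 : f ∉ F[X,Y]} ∪ ⋃_{(x,y) ∈ Q̄², f(x,y)=0} {F ∈ 𝓔 : x ∈ F and y ∈ F}, and this is a countable intersection. -/
open FirstOrder Topology

noncomputable section

/-- `Q̄`, the algebraic closure of `ℚ`. -/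
abbrev Qbar : Type := AlgebraicClosure ℚ

/-- `Prop` with the discrete two-point topology. -/
def propDiscrete : TopologicalSpace Prop := ⊥

/-- The product topology on the powerset `2^Q̄`, identified with `Set Q̄ = Q̄ → Prop`,
where each factor `Prop` carries the discrete two-point topology. -/
def powersetTopology : TopologicalSpace (Set Qbar) :=
  @Pi.topologicalSpace Qbar (fun _ => Prop) (fun _ => propDiscrete)

/-- The space `𝓔` of all subfields of `Q̄`, with the subspace topology induced from `2^Q̄`
via the identification of a subfield with its underlying set of elements. -/
instance subfieldTopology : TopologicalSpace (Subfield Qbar) :=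
  powersetTopology.induced (fun F => (F : Set Qbar))

/-- A subfield `F` of `Q̄` is PAC if every polynomial `f ∈ F[X,Y]` that is absolutely
irreducible (i.e. whose image in `Q̄[X,Y]` is irreducible) has a zero `(x,y) ∈ F × F`. -/
def IsPAC (F : Subfield Qbar) : Prop :=
  ∀ f : MvPolynomial (Fin 2) F,
    Irreducible (MvPolynomial.map F.subtype f) →
    ∃ x y : F, MvPolynomial.eval ![x, y] f = 0

/-- The set `U_f = {F ∈ 𝓔 : f ∉ F[X,Y]} ∪ ⋃_{(x,y) ∈ Q̄², f(x,y)=0} {F ∈ 𝓔 : x,y ∈ F}`. -/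
def U (f : MvPolynomial (Fin 2) Qbar) : Set (Subfield Qbar) :=
  {F | ¬ ∀ m, f.coeff m ∈ F} ∪
    ⋃ (p : Qbar × Qbar) (_ : MvPolynomial.eval ![p.1, p.2] f = 0),
      {F | p.1 ∈ F ∧ p.2 ∈ F}

/-! `F` is PAC iff, for every irreducible `f ∈ Q̄[X,Y]` whose coefficients all lie in `F` (so that
`f` comes from `F[X,Y]`), `f` has a zero in `F²`; that is exactly `F ∈ U_f`. Membership of a single
element in `F` is a clopen condition in the product topology, so each `U_f` is a union of finite
intersections of such conditions, hence open. Finally `Q̄[X,Y]` is countable because `Q̄` is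
algebraic over the countable field `ℚ`. -/

theorem Algebra.IsAlgebraic.countable_of_countable (K L : Type*) [Field K] [Field L] [Algebra K L]
    [Algebra.IsAlgebraic K L] [Countable K] : Countable L :=
  Set.countable_univ_iff.mp <| by
    simpa [Algebra.IsAlgebraic.isAlgebraic] using Algebraic.countable K L

-- Instance search finds `DivisionRing.toRatAlgebra` on `Qbar`, not the algebra structure
-- for which `AlgebraicClosure.isAlgebraic` is stated.
instance : Countable Qbar :=
  @Algebra.IsAlgebraic.countable_of_countable ℚ _ _ _ (AlgebraicClosure.instAlgebra ℚ) _ _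

instance MvPolynomial.instCountable {σ R : Type*} [CommSemiring R] [Countable σ] [Countable R] :
    Countable (MvPolynomial σ R) :=
  AddMonoidAlgebra.coeff_injective.countable

theorem isOpen_setOf_mem (c : Qbar) (P : Prop → Prop) :
    IsOpen {F : Subfield Qbar | P (c ∈ F)} := by
  have hc : Continuous[powersetTopology, propDiscrete] fun S : Set Qbar => S c :=
    @continuous_apply Qbar (fun _ => Prop) (fun _ => propDiscrete) c
  exact (isOpen_induced_iff (t := powersetTopology)).mpr
    ⟨_, @Continuous.isOpen_preimage _ _ powersetTopology propDiscrete _ hc {p | P p} trivial, rfl⟩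

theorem isOpen_U (f : MvPolynomial (Fin 2) Qbar) : IsOpen (U f) := by
  refine .union ?_ (isOpen_iUnion fun p => isOpen_iUnion fun _ => ?_)
  · simp only [not_forall, Set.ofPred_exists]
    exact isOpen_iUnion fun m => isOpen_setOf_mem _ Not
  · exact (isOpen_setOf_mem p.1 id).inter (isOpen_setOf_mem p.2 id)

namespace Subfield

variable {K σ : Type*} [Field K] (F : Subfield K)

theorem mem_range_map_subtype_iff {f : MvPolynomial σ K} :
    f ∈ Set.range (MvPolynomial.map F.subtype) ↔ ∀ m, f.coeff m ∈ F := by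
  refine ⟨?_, fun h => MvPolynomial.mem_range_map_iff_coeffs_subset.mpr fun c hc => ?_⟩
  · rintro ⟨g, rfl⟩ m
    simp [MvPolynomial.coeff_map]
  · obtain ⟨m, -, rfl⟩ := MvPolynomial.mem_coeffs_iff.mp hc
    exact ⟨⟨_, h m⟩, rfl⟩

theorem eval_map_subtype_eq_zero_iff (g : MvPolynomial σ F) (v : σ → F) :
    MvPolynomial.eval (F.subtype ∘ v) (MvPolynomial.map F.subtype g) = 0 ↔
      MvPolynomial.eval v g = 0 := by
  rw [← MvPolynomial.map_eval, map_eq_zero_iff _ F.subtype_injective]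

end Subfield

theorem mem_U_iff {F : Subfield Qbar} {f : MvPolynomial (Fin 2) Qbar} :
    F ∈ U f ↔ ((∀ m, f.coeff m ∈ F) → ∃ x y : F, MvPolynomial.eval ![(x : Qbar), y] f = 0) := by
  simp [U, imp_iff_not_or, and_comm]

theorem isPAC_iff_forall_mem_U (F : Subfield Qbar) :
    IsPAC F ↔ ∀ f, Irreducible f → F ∈ U f := by
  have hv (x y : F) : ![(x : Qbar), y] = F.subtype ∘ ![x, y] := by
    ext i; fin_cases i <;> rfl
  refine ⟨fun hF f hf => mem_U_iff.mpr fun hcoeff => ?_, fun hF g hg => ?_⟩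
  · obtain ⟨g, rfl⟩ := F.mem_range_map_subtype_iff.mpr hcoeff
    obtain ⟨x, y, hxy⟩ := hF g hf
    exact ⟨x, y, hv x y ▸ (F.eval_map_subtype_eq_zero_iff g _).mpr hxy⟩
  · obtain ⟨x, y, hxy⟩ := mem_U_iff.mp (hF _ hg) (F.mem_range_map_subtype_iff.mp ⟨g, rfl⟩)
    exact ⟨x, y, (F.eval_map_subtype_eq_zero_iff g _).mp (hv x y ▸ hxy)⟩

/-- The set of PAC subfields of `Q̄` is a `G_δ` subset of `𝓔`: explicitly, it is the
intersection of the sets `U_f` over all irreducible `f ∈ Q̄[X,Y]`, each `U_f` is open,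
and this is a countable intersection. -/
theorem pac_Gdelta_explicit :
    ({F : Subfield Qbar | IsPAC F} =
        ⋂ f ∈ {f : MvPolynomial (Fin 2) Qbar | Irreducible f}, U f) ∧
      (∀ f : MvPolynomial (Fin 2) Qbar, Irreducible f → IsOpen (U f)) ∧
      {f : MvPolynomial (Fin 2) Qbar | Irreducible f}.Countable ∧
      IsGδ {F : Subfield Qbar | IsPAC F} := by
  have hPAC : {F : Subfield Qbar | IsPAC F} =
      ⋂ f ∈ {f : MvPolynomial (Fin 2) Qbar | Irreducible f}, U f := by
    ext F
    simp only [Set.mem_iInter]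
    exact isPAC_iff_forall_mem_U F
  have hcount := Set.to_countable {f : MvPolynomial (Fin 2) Qbar | Irreducible f}
  refine ⟨hPAC, fun f _ => isOpen_U f, hcount, ?_⟩
  rw [hPAC]
  exact .biInter hcount fun f _ => (isOpen_U f).isGδ
end
end

section
/- The quotient map from the space 𝓔 of all subfields of Q̄ to the quotient space 𝓔̄ of 𝓔 by the equivalence relation of field isomorphism (with the quotient topology) is a closed map, i.e., the image of every closed subset of 𝓔 is closed in 𝓔̄. -/
/-! Two subfields of `Q̄` are isomorphic iff they are conjugate under `Gal(Q̄/ℚ)`, because an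
isomorphism between subfields extends to an automorphism of the normal extension `Q̄/ℚ`. Hence `𝓔̄`
is the orbit space of `Gal(Q̄/ℚ)` acting on `𝓔`. This action is continuous, since in the Krull
topology the stabilizer of each element of `Q̄` is open, and `Gal(Q̄/ℚ)` is compact; the saturation
`Gal(Q̄/ℚ) • C` of a closed set `C` is then closed, being the projection of a closed subset of
`Gal(Q̄/ℚ) × 𝓔` along a compact factor. -/

open FirstOrder Topology

noncomputable section

/-- Two subfields of `Q̄` are equivalent iff they are isomorphic as fields
(equivalently, as rings). -/
def isoSetoid : Setoid (Subfield Qbar) where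
  r F K := Nonempty (F ≃+* K)
  iseqv := ⟨fun _ => ⟨RingEquiv.refl _⟩, fun ⟨e⟩ => ⟨e.symm⟩, fun ⟨e⟩ ⟨e'⟩ => ⟨e.trans e'⟩⟩

open scoped Pointwise

-- `Gal(Qbar/ℚ)` uses the instance `DivisionRing.toRatAlgebra`, not the `Algebra ℚ Qbar` for which
-- `AlgebraicClosure` registers `IsAlgClosure`; the two agree as `ℚ`-algebra structures are unique.
instance : IsAlgClosure ℚ Qbar :=
  ⟨inferInstance, Subsingleton.elim (AlgebraicClosure.instAlgebra ℚ) DivisionRing.toRatAlgebra ▸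
    AlgebraicClosure.isAlgebraic ℚ⟩

namespace Subfield

variable {M K : Type*} [Field K]

instance pointwiseMulAction [Monoid M] [MulSemiringAction M K] : MulAction M (Subfield K) where
  smul a S := S.map (MulSemiringAction.toRingHom _ _ a)
  one_smul S := SetLike.coe_injective (one_smul M (S : Set K))
  mul_smul a b S := SetLike.coe_injective (mul_smul a b (S : Set K))

theorem mem_pointwise_smul_iff_exists [Monoid M] [MulSemiringAction M K] {a : M}
    {S : Subfield K} {x : K} : x ∈ a • S ↔ ∃ y ∈ S, a • y = x :=
  Set.mem_smul_set

theorem mem_pointwise_smul_iff_inv_smul_mem [Group M] [MulSemiringAction M K] {a : M}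
    {S : Subfield K} {x : K} : x ∈ a • S ↔ a⁻¹ • x ∈ S :=
  Set.mem_smul_set_iff_inv_smul_mem

end Subfield

theorem continuous_propDiscrete_iff {X : Type*} [TopologicalSpace X] {p : X → Prop} :
    Continuous[_, propDiscrete] p ↔ IsClopen {a | p a} := by
  let _ : TopologicalSpace Prop := propDiscrete
  have _ : DiscreteTopology Prop := ⟨rfl⟩
  rw [continuous_discrete_rng]
  refine ⟨fun h => ⟨by simpa [← Set.compl_ofPred] using h False, by simpa using h True⟩,
    fun h q => ?_⟩
  by_cases hq : q
  · simpa [hq] using h.isOpen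
  · simpa [hq, ← Set.compl_ofPred] using h.isClosed

theorem continuous_subfield_iff {X : Type*} [TopologicalSpace X] {f : X → Subfield Qbar} :
    Continuous f ↔ ∀ x, IsClopen {a | x ∈ f a} :=
  continuous_induced_rng.trans <|
    (@continuous_pi_iff X Qbar (fun _ => Prop) _ (fun _ => propDiscrete) _).trans <|
      forall_congr' fun _ => continuous_propDiscrete_iff

instance : ContinuousSMul Gal(Qbar/ℚ) (Subfield Qbar) := by
  let _ : TopologicalSpace Qbar := ⊥
  have _ : DiscreteTopology Qbar := ⟨rfl⟩
  have _ : ContinuousSMul Gal(Qbar/ℚ) Qbar :=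
    continuousSMul_iff_stabilizer_isOpen.mpr stabilizer_isOpen_of_isIntegral
  have isClopen_mem : IsClopen {q : Qbar × Subfield Qbar | q.1 ∈ q.2} := by
    rw [← continuous_boolIndicator_iff_isClopen, continuous_prod_of_discrete_left]
    exact fun y => (continuous_boolIndicator_iff_isClopen _).mpr
      (continuous_subfield_iff.mp continuous_id y)
  refine ⟨continuous_subfield_iff.mpr fun x => ?_⟩
  simp only [Subfield.mem_pointwise_smul_iff_inv_smul_mem]
  exact isClopen_mem.preimage
    (((continuous_inv.comp continuous_fst).smul continuous_const).prodMk continuous_snd)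

theorem exists_smul_eq_of_ringEquiv {F K : Subfield Qbar} (e : F ≃+* K) :
    ∃ σ : Gal(Qbar/ℚ), σ • F = K := by
  let σ := e.toRatAlgEquiv.liftNormal Qbar
  have hσ (y : F) : σ y = e y := e.toRatAlgEquiv.liftNormal_commutes Qbar y
  refine ⟨σ, SetLike.ext fun x => Subfield.mem_pointwise_smul_iff_exists.trans ⟨?_, fun hx => ?_⟩⟩
  · rintro ⟨y, hy, rfl⟩
    rw [AlgEquiv.smul_def, hσ ⟨y, hy⟩]
    exact (e ⟨y, hy⟩).2
  · exact ⟨_, (e.symm ⟨x, hx⟩).2, (hσ _).trans (by simp)⟩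

theorem isoSetoid_eq_orbitRel : isoSetoid = MulAction.orbitRel Gal(Qbar/ℚ) (Subfield Qbar) := by
  ext F K
  constructor
  · rintro ⟨e⟩
    exact exists_smul_eq_of_ringEquiv e.symm
  · rintro ⟨σ, rfl⟩
    exact ⟨((MulSemiringAction.toRingEquiv _ _ σ).subringMap (s := K.toSubring)).symm⟩

/-- The quotient map from the space `𝓔` of all subfields of `Q̄` to the quotient space `𝓔̄`
of `𝓔` by field isomorphism (with the quotient topology) is a closed map. -/
theorem quotient_mk_isClosedMap :
    IsClosedMap (Quotient.mk isoSetoid : Subfield Qbar → Quotient isoSetoid) := by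
  rw [isoSetoid_eq_orbitRel]
  exact MulAction.isClosedMap_quotient
end
end
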